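/- Suppose that every optimal decision rule d̂* of the extended MDP satisfies: (1) d̂*(2,j) ∉ {a11, a12} for j = 3, …, N-3; (2) d̂*(2,N-2) ≠ a11; (3) d̂*(i,2) ∉ {a21, a22} for i = 3, …, N-3; (4) d̂*(N-2,2) ≠ a21; (5) d̂*(2,2) ∉ {a11, a12, a21, a22}. Then every optimal decision rule d* of the auxiliary MDP satisfies: (1') d*(2,j) ∉ {a11', a12'} for j = 3, …, N-3; (2') d*(2,N-2) ≠ a11'; (3') d*(i,2) ∉ {a21', a22'} for i = 3, …, N-3; (4') d*(N-2,2) ≠ a21'; (5') d*(2,2) ∉ {a11', a12', a21', a22'}. -/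

import Mathlib

namespace AuxMDP

/-- The action labels of the auxiliary MDP. -/
inductive Lab
  | a11 | a12 | a21 | a22 | a11p | a12p | a21p | a22p | a0 | atil | zero
  deriving DecidableEq

/-- Side lengths in `{2, …, N-2} ∪ {N}`. -/
def goodIdx (N i : ℕ) : Prop := (2 ≤ i ∧ i ≤ N - 2) ∨ i = N

instance (N i : ℕ) : Decidable (goodIdx N i) := by unfold goodIdx; infer_instance

/-- The state space `Ŝ` of the auxiliary MDP. -/
def ShatP (N : ℕ) (s : ℕ × ℕ) : Prop :=
  (goodIdx N s.1 ∧ goodIdx N s.2) ∨ s = (0, 0)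

instance (N : ℕ) (s : ℕ × ℕ) : Decidable (ShatP N s) := by unfold ShatP; infer_instance

/-- The state space as a `Finset`. -/
def ShatF (N : ℕ) : Finset (ℕ × ℕ) :=
  (Finset.range (N + 1) ×ˢ Finset.range (N + 1)).filter (ShatP N)

/-- The admissible action set `Â(s)`. -/
def ActOK (N : ℕ) (s : ℕ × ℕ) (a : Lab) : Prop :=
  if s = (0, 0) ∨ s = (N, N) then a = Lab.zero
  else
    match a with
    | Lab.zero => True
    | Lab.a11 => 3 ≤ s.1 ∧ s.2 ≤ N - 2
    | Lab.a12 => 3 ≤ s.1 ∧ s.2 ≤ N - 3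
    | Lab.a11p => s.1 ≤ N - 2 ∧ s.2 ≤ N - 2
    | Lab.a12p => s.1 ≤ N - 2 ∧ s.2 ≤ N - 3
    | Lab.a21 => 3 ≤ s.2 ∧ s.1 ≤ N - 2
    | Lab.a22 => 3 ≤ s.2 ∧ s.1 ≤ N - 3
    | Lab.a21p => s.2 ≤ N - 2 ∧ s.1 ≤ N - 2
    | Lab.a22p => s.2 ≤ N - 2 ∧ s.1 ≤ N - 3
    | Lab.a0 => s.1 ≤ N - 2 ∧ s.2 ≤ N - 2
    | Lab.atil => s.1 ≤ N - 2 ∧ s.2 ≤ N - 2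

/-- Kernel of the action `a11` (flip at distance 1 from the horizontal side,
away from the corners). -/
noncomputable def ker11 (N : ℕ) (s s' : ℕ × ℕ) : ℝ :=
  if s.2 ≤ N - 3 then
    (if s' = s then 1/3 else if s' = (s.1, s.2 + 1) then 2/3 else 0)
  else if s.2 = N - 2 then
    (if s' = s then 1/4 else if s' = (s.1, N) then 3/4 else 0)
  else 0

/-- Kernel of the action `a11'`. -/
noncomputable def ker11p (N : ℕ) (s s' : ℕ × ℕ) : ℝ :=
  if s.2 ≤ N - 3 then
    (if s' = s then 1/2 else if s' = (s.1, s.2 + 1) then 1/2 else 0)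
  else if s.2 = N - 2 then
    (if s' = s then 1/3 else if s' = (s.1, N) then 2/3 else 0)
  else 0

/-- Kernel of the action `a12`. -/
noncomputable def ker12 (N : ℕ) (s s' : ℕ × ℕ) : ℝ :=
  if s.2 ≤ N - 4 then
    (if s' = s then 5/9 else if s' = (s.1, s.2 + 1) then 7/27
     else if s' = (s.1, s.2 + 2) then 5/27 else 0)
  else if s.2 = N - 3 then
    (if s' = s then 7/18 else if s' = (s.1, N - 2) then 31/144
     else if s' = (s.1, N) then 19/48 else 0)
  else 0

/-- Kernel of the action `a12'`. -/
noncomputable def ker12p (N : ℕ) (s s' : ℕ × ℕ) : ℝ :=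
  if s.2 ≤ N - 4 then
    (if s' = s then 5/8 else if s' = (s.1, s.2 + 1) then 1/4
     else if s' = (s.1, s.2 + 2) then 1/8 else 0)
  else if s.2 = N - 3 then
    (if s' = s then 4/9 else if s' = (s.1, N - 2) then 5/27
     else if s' = (s.1, N) then 10/27 else 0)
  else 0

/-- Kernel of the action `a0` (diagonal flip). -/
noncomputable def ker0 (N : ℕ) (s s' : ℕ × ℕ) : ℝ :=
  if s.1 ≤ N - 3 ∧ s.2 ≤ N - 3 then
    (if s' = s then 4/9 else if s' = (s.1 + 1, s.2) then 1/9
     else if s' = (s.1, s.2 + 1) then 1/9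
     else if s' = (s.1 + 1, s.2 + 1) then 1/3 else 0)
  else if s.1 ≤ N - 3 ∧ s.2 = N - 2 then
    (if s' = s then 5/12 else if s' = (s.1, N) then 1/8
     else if s' = (s.1 + 1, N - 2) then 1/9
     else if s' = (s.1 + 1, N) then 25/72 else 0)
  else if s.1 = N - 2 ∧ s.2 ≤ N - 3 then
    (if s' = s then 5/12 else if s' = (N, s.2) then 1/8
     else if s' = (N - 2, s.2 + 1) then 1/9
     else if s' = (N, s.2 + 1) then 25/72 else 0)
  else if s.1 = N - 2 ∧ s.2 = N - 2 then
    (if s' = s then 7/18 else if s' = (N, N - 2) then 1/8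
     else if s' = (N - 2, N) then 1/8
     else if s' = (N, N) then 13/36 else 0)
  else 0

/-- Kernel of the action `ã` (flip a corner spin of the rectangle). -/
noncomputable def kerTil (N : ℕ) (s s' : ℕ × ℕ) : ℝ :=
  if 3 ≤ s.1 ∧ 3 ≤ s.2 then (if s' = s then 1 else 0)
  else if s.1 = 2 ∧ 3 ≤ s.2 then
    (if s' = s then 1/2 else if s' = (2, s.2 - 1) then 1/2 else 0)
  else if 3 ≤ s.1 ∧ s.2 = 2 then
    (if s' = s then 1/2 else if s' = (s.1 - 1, 2) then 1/2 else 0)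
  else if s.1 = 2 ∧ s.2 = 2 then
    (if s' = s then 1/3 else if s' = ((0 : ℕ), (0 : ℕ)) then 2/3 else 0)
  else 0

/-- Coordinate swap. -/
def swp (s : ℕ × ℕ) : ℕ × ℕ := (s.2, s.1)

/-- The transition kernel `P̂(s' | s, a)` of the auxiliary MDP. -/
noncomputable def Phat (N : ℕ) (s : ℕ × ℕ) (a : Lab) (s' : ℕ × ℕ) : ℝ :=
  match a with
  | Lab.zero => if s' = s then 1 else 0
  | Lab.a11 => ker11 N s s'
  | Lab.a12 => ker12 N s s'
  | Lab.a11p => ker11p N s s'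
  | Lab.a12p => ker12p N s s'
  | Lab.a21 => ker11 N (swp s) (swp s')
  | Lab.a22 => ker12 N (swp s) (swp s')
  | Lab.a21p => ker11p N (swp s) (swp s')
  | Lab.a22p => ker12p N (swp s) (swp s')
  | Lab.a0 => ker0 N s s'
  | Lab.atil => kerTil N s s'

/-- The reward function of the auxiliary MDP. -/
noncomputable def rhat (N : ℕ) (s : ℕ × ℕ) : ℝ := if s = (N, N) then 1 else 0

/-- `d` is a decision rule: it selects admissible actions on `Ŝ`. -/
def IsRule (N : ℕ) (d : ℕ × ℕ → Lab) : Prop :=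
  ∀ s : ℕ × ℕ, ShatP N s → ActOK N s (d s)

/-- `v` is the value function of the decision rule `d` (the unique solution
of the evaluation equations on `Ŝ`). -/
def IsValue (N : ℕ) (lam : ℝ) (d : ℕ × ℕ → Lab) (v : ℕ × ℕ → ℝ) : Prop :=
  ∀ s ∈ ShatF N, v s = rhat N s + lam * ∑ s' ∈ ShatF N, Phat N s (d s) s' * v s'

/-- `d` is an optimal decision rule: its value function dominates the value
function of every decision rule at every state of `Ŝ`. -/
def IsOptimal (N : ℕ) (lam : ℝ) (d : ℕ × ℕ → Lab) : Prop :=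
  IsRule N d ∧
  ∀ vd : ℕ × ℕ → ℝ, IsValue N lam d vd →
    ∀ d' : ℕ × ℕ → Lab, IsRule N d' →
      ∀ v' : ℕ × ℕ → ℝ, IsValue N lam d' v' →
        ∀ s : ℕ × ℕ, ShatP N s → v' s ≤ vd s

/-- The enlarged admissible action sets `Â'` of the extended MDP. -/
def ActOK' (N : ℕ) (s : ℕ × ℕ) (a : Lab) : Prop :=
  ActOK N s a ∨
  (s.1 = 2 ∧ ((a = Lab.a11 ∧ 3 ≤ s.2 ∧ s.2 ≤ N - 2) ∨
              (a = Lab.a12 ∧ 3 ≤ s.2 ∧ s.2 ≤ N - 3))) ∨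
  (s.2 = 2 ∧ ((a = Lab.a21 ∧ 3 ≤ s.1 ∧ s.1 ≤ N - 2) ∨
              (a = Lab.a22 ∧ 3 ≤ s.1 ∧ s.1 ≤ N - 3))) ∨
  (s = (2, 2) ∧ (a = Lab.a11 ∨ a = Lab.a12 ∨ a = Lab.a21 ∨ a = Lab.a22))

/-- Decision rules of the extended MDP. -/
def IsRule' (N : ℕ) (d : ℕ × ℕ → Lab) : Prop :=
  ∀ s : ℕ × ℕ, ShatP N s → ActOK' N s (d s)

/-- Optimal decision rules of the extended MDP (same kernel and reward). -/
def IsOptimal' (N : ℕ) (lam : ℝ) (d : ℕ × ℕ → Lab) : Prop :=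
  IsRule' N d ∧
  ∀ vd : ℕ × ℕ → ℝ, IsValue N lam d vd →
    ∀ d' : ℕ × ℕ → Lab, IsRule' N d' →
      ∀ v' : ℕ × ℕ → ℝ, IsValue N lam d' v' →
        ∀ s : ℕ × ℕ, ShatP N s → v' s ≤ vd s

/-!
Let `v` be the optimal value of the extended MDP and `g` a rule that is greedy for it. Greedy
rules are optimal, so by hypothesis `g` uses no added action and is a rule of the auxiliary MDP;
hence every optimal rule `d` of the auxiliary MDP has value `v`, i.e. is greedy for `v` too. An
added action `b` at `s` is strictly suboptimal for `v`: otherwise redirecting `g` to `b` at `s`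
would give an optimal rule of the extended MDP that uses `b`. Finally the Bellman residual
`v s - Q v s a'` of a primed action is a positive combination of residuals of admissible actions,
one of them strictly positive. Mostly this is because the primed kernel is a mixture of "stay"
and of unprimed kernels at the same state; at `(2, N - 3)` the combination also involves `a11`
at `(2, N - 2)`, with `λ`-dependent weights.
-/

instance : Fintype Lab where
  elems := {Lab.a11, Lab.a12, Lab.a21, Lab.a22, Lab.a11p, Lab.a12p, Lab.a21p, Lab.a22p, Lab.a0,
    Lab.atil, Lab.zero}
  complete a := by cases a <;> simp

section DiscountedMDP

variable {σ α : Type*}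

def actionValue (S : Finset σ) (P : σ → α → σ → ℝ) (r : σ → ℝ) (lam : ℝ) (v : σ → ℝ) (s : σ)
    (a : α) : ℝ :=
  r s + lam * ∑ t ∈ S, P s a t * v t

def IsSubstochastic (S : Finset σ) (P : σ → α → σ → ℝ) : Prop :=
  (∀ s a t, 0 ≤ P s a t) ∧ ∀ s a, ∑ t ∈ S, P s a t ≤ 1

def IsBellmanSolution (S : Finset σ) (P : σ → α → σ → ℝ) (r : σ → ℝ) (lam : ℝ)
    (A : σ → α → Prop) (v : σ → ℝ) : Prop :=
  ∀ s ∈ S, (∀ a, A s a → actionValue S P r lam v s a ≤ v s) ∧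
    ∃ a, A s a ∧ actionValue S P r lam v s a = v s

variable {S : Finset σ} {P : σ → α → σ → ℝ} {r : σ → ℝ} {lam : ℝ}

lemma sum_mul_le_of_le {p u : σ → ℝ} {C : ℝ} (hp0 : ∀ t, 0 ≤ p t) (hp1 : ∑ t ∈ S, p t ≤ 1)
    (hC : 0 ≤ C) (hu : ∀ t ∈ S, u t ≤ C) : ∑ t ∈ S, p t * u t ≤ C :=
  calc ∑ t ∈ S, p t * u t ≤ ∑ t ∈ S, p t * C :=
        Finset.sum_le_sum fun t ht => mul_le_mul_of_nonneg_left (hu t ht) (hp0 t)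
    _ = (∑ t ∈ S, p t) * C := (Finset.sum_mul ..).symm
    _ ≤ C := mul_le_of_le_one_left hC hp1

lemma actionValue_sub_actionValue (u w : σ → ℝ) (s : σ) (a : α) :
    actionValue S P r lam u s a - actionValue S P r lam w s a =
      lam * ∑ t ∈ S, P s a t * (u t - w t) := by
  simp only [actionValue, mul_sub, Finset.sum_sub_distrib]
  ring

lemma actionValue_congr {u w : σ → ℝ} (h : ∀ t ∈ S, u t = w t) (s : σ) (a : α) :
    actionValue S P r lam u s a = actionValue S P r lam w s a := by
  rw [← sub_eq_zero, actionValue_sub_actionValue,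
    Finset.sum_eq_zero fun t ht => by rw [h t ht, sub_self, mul_zero], mul_zero]

lemma abs_actionValue_sub_le (hP : IsSubstochastic S P) (hl0 : 0 ≤ lam) {u w : σ → ℝ} {C : ℝ}
    (hC : 0 ≤ C) (h : ∀ t ∈ S, |u t - w t| ≤ C) (s : σ) (a : α) :
    |actionValue S P r lam u s a - actionValue S P r lam w s a| ≤ lam * C := by
  rw [actionValue_sub_actionValue, abs_mul, abs_of_nonneg hl0]
  refine mul_le_mul_of_nonneg_left (abs_le.2 ⟨?_, ?_⟩) hl0
  · have := sum_mul_le_of_le (u := fun t => w t - u t) (hP.1 s a) (hP.2 s a) hC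
      fun t ht => by linarith [abs_le.1 (h t ht)]
    simp only [mul_sub, Finset.sum_sub_distrib] at this ⊢
    linarith
  · exact sum_mul_le_of_le (hP.1 s a) (hP.2 s a) hC fun t ht => (abs_le.1 (h t ht)).2

theorem le_of_le_actionValue_of_actionValue_le (hP : IsSubstochastic S P) (hl0 : 0 ≤ lam)
    (hl1 : lam < 1) {d : σ → α} {u w : σ → ℝ}
    (hu : ∀ s ∈ S, u s ≤ actionValue S P r lam u s (d s))
    (hw : ∀ s ∈ S, actionValue S P r lam w s (d s) ≤ w s) : ∀ s ∈ S, u s ≤ w s := by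
  by_contra! h
  obtain ⟨s₁, hs₁, h₁⟩ := h
  obtain ⟨s₀, hs₀, hmax⟩ := S.exists_max_image (fun s => u s - w s) ⟨s₁, hs₁⟩
  have hM : 0 < u s₀ - w s₀ := by linarith [hmax s₁ hs₁]
  have hstep : u s₀ - w s₀ ≤ lam * (u s₀ - w s₀) := calc
    u s₀ - w s₀ ≤ actionValue S P r lam u s₀ (d s₀) - actionValue S P r lam w s₀ (d s₀) := by
      linarith [hu s₀ hs₀, hw s₀ hs₀]
    _ = lam * ∑ t ∈ S, P s₀ (d s₀) t * (u t - w t) := actionValue_sub_actionValue ..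
    _ ≤ lam * (u s₀ - w s₀) :=
      mul_le_mul_of_nonneg_left (sum_mul_le_of_le (hP.1 _ _) (hP.2 _ _) hM.le hmax) hl0
  exact hstep.not_gt (mul_lt_of_lt_one_left hM hl1)

lemma abs_sup'_sub_sup'_le {ι : Type*} {s : Finset ι} (hs : s.Nonempty) {f g : ι → ℝ} {C : ℝ}
    (h : ∀ i ∈ s, |f i - g i| ≤ C) : |s.sup' hs f - s.sup' hs g| ≤ C := by
  rw [abs_sub_le_iff, sub_le_iff_le_add, sub_le_iff_le_add]
  constructor <;> refine Finset.sup'_le _ _ fun i hi => ?_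
  · linarith [(abs_sub_le_iff.1 (h i hi)).1, Finset.le_sup' g hi]
  · linarith [(abs_sub_le_iff.1 (h i hi)).2, Finset.le_sup' f hi]

/-- The Bellman optimality operator is a `lam`-contraction of `S → ℝ`. -/
theorem exists_isBellmanSolution [Fintype α] (hP : IsSubstochastic S P) (hl0 : 0 ≤ lam)
    (hl1 : lam < 1) (A : σ → α → Prop) (hA : ∀ s, ∃ a, A s a) :
    ∃ v, IsBellmanSolution S P r lam A v := by
  classical
  have hne : ∀ s, (Finset.univ.filter (A s)).Nonempty := fun s =>
    (hA s).imp fun a ha => by simpa using ha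
  let lift : (S → ℝ) → σ → ℝ := fun f s => if h : s ∈ S then f ⟨s, h⟩ else 0
  have hlift : ∀ f g, ∀ t ∈ S, |lift f t - lift g t| ≤ dist f g := fun f g t ht => by
    simpa only [lift, dif_pos ht, Real.dist_eq] using dist_le_pi_dist f g ⟨t, ht⟩
  let T : (S → ℝ) → S → ℝ := fun f s =>
    (Finset.univ.filter (A s)).sup' (hne s) (actionValue S P r lam (lift f) s)
  have hT : ContractingWith ⟨lam, hl0⟩ T := by
    refine ⟨NNReal.coe_lt_coe.mp hl1, LipschitzWith.of_dist_le_mul fun f g => ?_⟩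
    refine (dist_pi_le_iff (by positivity)).2 fun s => ?_
    exact abs_sup'_sub_sup'_le _ fun a _ =>
      abs_actionValue_sub_le hP hl0 dist_nonneg (hlift f g) s a
  have hw : ∀ s (hs : s ∈ S), lift (hT.fixedPoint T) s = (Finset.univ.filter (A s)).sup' (hne s)
      (actionValue S P r lam (lift (hT.fixedPoint T)) s) := fun s hs => by
    simp only [lift, dif_pos hs]
    exact (congrFun hT.fixedPoint_isFixedPt ⟨s, hs⟩).symm
  refine ⟨lift (hT.fixedPoint T), fun s hs => ⟨fun a ha => ?_, ?_⟩⟩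
  · rw [hw s hs]
    exact Finset.le_sup' _ (by simpa using ha)
  · obtain ⟨a, ha, he⟩ := Finset.exists_mem_eq_sup' (hne s)
      (actionValue S P r lam (lift (hT.fixedPoint T)) s)
    exact ⟨a, by simpa using ha, by rw [hw s hs, he]⟩

namespace IsBellmanSolution

variable {A : σ → α → Prop} {v : σ → ℝ}

lemma exists_greedy (hv : IsBellmanSolution S P r lam A v) (hA : ∀ s, ∃ a, A s a) :
    ∃ g : σ → α, (∀ s, A s (g s)) ∧ ∀ s ∈ S, actionValue S P r lam v s (g s) = v s := by
  have : ∀ s, ∃ a, A s a ∧ (s ∈ S → actionValue S P r lam v s a = v s) := fun s => by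
    by_cases hs : s ∈ S
    · obtain ⟨a, ha, he⟩ := (hv s hs).2
      exact ⟨a, ha, fun _ => he⟩
    · obtain ⟨a, ha⟩ := hA s
      exact ⟨a, ha, fun h => absurd h hs⟩
  choose g hgA hgv using this
  exact ⟨g, hgA, hgv⟩

lemma le_of_eq_actionValue (hv : IsBellmanSolution S P r lam A v) (hP : IsSubstochastic S P)
    (hl0 : 0 ≤ lam) (hl1 : lam < 1) {d : σ → α} (hd : ∀ s ∈ S, A s (d s)) {u : σ → ℝ}
    (hu : ∀ s ∈ S, u s = actionValue S P r lam u s (d s)) : ∀ s ∈ S, u s ≤ v s :=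
  le_of_le_actionValue_of_actionValue_le hP hl0 hl1 (fun s hs => (hu s hs).le)
    fun s hs => (hv s hs).1 _ (hd s hs)

lemma eq_of_greedy (hv : IsBellmanSolution S P r lam A v) (hP : IsSubstochastic S P)
    (hl0 : 0 ≤ lam) (hl1 : lam < 1) {g : σ → α} (hgA : ∀ s ∈ S, A s (g s))
    (hgv : ∀ s ∈ S, actionValue S P r lam v s (g s) = v s) {u : σ → ℝ}
    (hu : ∀ s ∈ S, u s = actionValue S P r lam u s (g s)) : ∀ s ∈ S, u s = v s := fun s hs =>
  le_antisymm (hv.le_of_eq_actionValue hP hl0 hl1 hgA hu s hs) <|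
    le_of_le_actionValue_of_actionValue_le hP hl0 hl1 (fun s hs => (hgv s hs).ge)
      (fun s hs => (hu s hs).ge) s hs

end IsBellmanSolution

end DiscountedMDP

local notation "Q[" N ", " lam "]" => actionValue (ShatF N) (Phat N) (rhat N) lam

section Kernel

variable {N : ℕ} {s : ℕ × ℕ}

lemma mem_ShatF_iff : s ∈ ShatF N ↔ ShatP N s := by
  refine ⟨fun h => (Finset.mem_filter.1 h).2, fun h => Finset.mem_filter.2 ⟨?_, h⟩⟩
  simp only [Finset.mem_product, Finset.mem_range]
  rcases h with ⟨h1, h2⟩ | rfl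
  · unfold goodIdx at h1 h2
    omega
  · omega

lemma mk_mem_ShatF {i j : ℕ} (hi : 2 ≤ i) (hi' : i ≤ N - 2) (hj : 2 ≤ j) (hj' : j ≤ N - 2) :
    (i, j) ∈ ShatF N :=
  mem_ShatF_iff.2 (Or.inl ⟨Or.inl ⟨hi, hi'⟩, Or.inl ⟨hj, hj'⟩⟩)

lemma swp_injective : Function.Injective swp := fun _ _ h => by
  simpa [swp, Prod.ext_iff, and_comm] using h

lemma swp_mem_ShatF (hs : s ∈ ShatF N) : swp s ∈ ShatF N := by
  rw [mem_ShatF_iff] at hs ⊢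
  rcases hs with ⟨h1, h2⟩ | rfl
  · exact Or.inl ⟨h2, h1⟩
  · exact Or.inr rfl

lemma rhat_swp : rhat N (swp s) = rhat N s := by
  simp only [rhat, swp, Prod.ext_iff, and_comm]

lemma Phat_zero_swp (x : ℕ × ℕ) : Phat N s Lab.zero (swp x) = Phat N (swp s) Lab.zero x := by
  simp only [Phat, swp, Prod.ext_iff, and_comm]

lemma sum_Phat_zero_mul (hs : s ∈ ShatF N) (v : ℕ × ℕ → ℝ) :
    ∑ x ∈ ShatF N, Phat N s Lab.zero x * v x = v s := by
  simp [Phat, hs]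

lemma Phat_nonneg (s : ℕ × ℕ) (a : Lab) (x : ℕ × ℕ) : 0 ≤ Phat N s a x := by
  cases a <;> simp only [Phat, ker11, ker12, ker11p, ker12p, ker0, kerTil] <;>
    split_ifs <;> norm_num

/-- Stated with `b - c` so that it can be applied once per branch of a nested `if`. -/
lemma sum_ite_le {σ τ : Type*} [DecidableEq τ] {S : Finset σ} {f : σ → τ}
    (hf : Function.Injective f) {t : τ} {c b : ℝ} (hc : 0 ≤ c) {g : σ → ℝ}
    (hg : ∀ x, 0 ≤ g x) (hb : ∑ x ∈ S, g x ≤ b - c) :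
    ∑ x ∈ S, (if f x = t then c else g x) ≤ b := by
  have hpt : ∀ x ∈ S, (if f x = t then c else g x) ≤ (if f x = t then c else 0) + g x := by
    intro x _
    split_ifs <;> linarith [hg x]
  have hone : ∑ x ∈ S, (if f x = t then c else 0) ≤ c := by
    rw [← Finset.sum_image (f := fun y => if y = t then c else 0) hf.injOn, Finset.sum_ite_eq']
    split_ifs <;> linarith
  linarith [Finset.sum_le_sum hpt, Finset.sum_add_distrib (s := S)
    (f := fun x => if f x = t then c else 0) (g := g)]

lemma sum_ker_le_one (s : ℕ × ℕ) (S : Finset (ℕ × ℕ)) :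
    ∑ x ∈ S, ker11 N s x ≤ 1 ∧ ∑ x ∈ S, ker12 N s x ≤ 1 ∧ ∑ x ∈ S, ker11p N s x ≤ 1 ∧
      ∑ x ∈ S, ker12p N s x ≤ 1 ∧ ∑ x ∈ S, ker0 N s x ≤ 1 ∧ ∑ x ∈ S, kerTil N s x ≤ 1 := by
  refine ⟨?_, ?_, ?_, ?_, ?_, ?_⟩ <;>
    simp only [ker11, ker12, ker11p, ker12p, ker0, kerTil, Finset.sum_ite_irrel] <;> split_ifs
  all_goals
    repeat refine sum_ite_le (f := id) (fun _ _ h => h) (by norm_num)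
             (fun _ => by (try split_ifs) <;> norm_num) ?_
  all_goals norm_num

lemma sum_Phat_le_one (s : ℕ × ℕ) (a : Lab) (S : Finset (ℕ × ℕ)) :
    ∑ x ∈ S, Phat N s a x ≤ 1 := by
  have h := sum_ker_le_one (N := N)
  have hswp := fun k : ℕ × ℕ → ℝ => (Finset.sum_image (f := k) (s := S) swp_injective.injOn).symm
  cases a
  case a11 => exact (h s S).1
  case a12 => exact (h s S).2.1
  case a11p => exact (h s S).2.2.1
  case a12p => exact (h s S).2.2.2.1
  case a0 => exact (h s S).2.2.2.2.1
  case atil => exact (h s S).2.2.2.2.2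
  case a21 => exact (hswp _).trans_le (h (swp s) _).1
  case a22 => exact (hswp _).trans_le (h (swp s) _).2.1
  case a21p => exact (hswp _).trans_le (h (swp s) _).2.2.1
  case a22p => exact (hswp _).trans_le (h (swp s) _).2.2.2.1
  case zero =>
    simp only [Phat, Finset.sum_ite_eq']
    split_ifs <;> norm_num

lemma isSubstochastic_Phat (N : ℕ) : IsSubstochastic (ShatF N) (Phat N) :=
  ⟨Phat_nonneg, fun s a => sum_Phat_le_one s a _⟩

lemma actionValue_comp_swp {lam : ℝ} {a b : Lab} (h : ∀ x, Phat N s a (swp x) = Phat N (swp s) b x)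
    (v : ℕ × ℕ → ℝ) : Q[N, lam] (v ∘ swp) s a = Q[N, lam] v (swp s) b := by
  simp only [actionValue, rhat_swp]
  congr 2
  exact Finset.sum_nbij' swp swp (fun _ => swp_mem_ShatF) (fun _ => swp_mem_ShatF)
    (fun _ _ => rfl) (fun _ _ => rfl) fun x _ => by rw [← h (swp x)]; rfl

end Kernel

lemma actOK'_zero (N : ℕ) (s : ℕ × ℕ) : ActOK' N s Lab.zero := by
  left
  unfold ActOK
  split_ifs <;> trivial

section Optimality

variable {N : ℕ} {lam : ℝ} {v : ℕ × ℕ → ℝ} {g : ℕ × ℕ → Lab}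

lemma exists_isValue (hl0 : 0 ≤ lam) (hl1 : lam < 1) (d : ℕ × ℕ → Lab) :
    ∃ v, IsValue N lam d v := by
  obtain ⟨v, hv⟩ := exists_isBellmanSolution (r := rhat N) (isSubstochastic_Phat N) hl0 hl1
    (fun s a => a = d s) fun s => ⟨d s, rfl⟩
  refine ⟨v, fun s hs => ?_⟩
  obtain ⟨a, rfl, ha⟩ := (hv s hs).2
  exact ha.symm

lemma isOptimal'_of_greedy (hl0 : 0 ≤ lam) (hl1 : lam < 1)
    (hv : IsBellmanSolution (ShatF N) (Phat N) (rhat N) lam (ActOK' N) v)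
    (hgv : ∀ s ∈ ShatF N, Q[N, lam] v s (g s) = v s) (hg : ∀ s, ActOK' N s (g s)) :
    IsOptimal' N lam g := by
  refine ⟨fun s _ => hg s, fun vg hvg d' hd' v' hv' s hs => ?_⟩
  rw [← mem_ShatF_iff] at hs
  have hd'F : ∀ x ∈ ShatF N, ActOK' N x (d' x) := fun x hx => hd' x (mem_ShatF_iff.1 hx)
  calc v' s ≤ v s := hv.le_of_eq_actionValue (isSubstochastic_Phat N) hl0 hl1 hd'F hv' s hs
    _ = vg s := (hv.eq_of_greedy (isSubstochastic_Phat N) hl0 hl1 (fun x _ => hg x) hgv hvg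
      s hs).symm

lemma actionValue_lt_of_forall_isOptimal'_ne (hl0 : 0 ≤ lam) (hl1 : lam < 1)
    (hv : IsBellmanSolution (ShatF N) (Phat N) (rhat N) lam (ActOK' N) v)
    (hgv : ∀ s ∈ ShatF N, Q[N, lam] v s (g s) = v s) (hg : ∀ s, ActOK' N s (g s)) {s : ℕ × ℕ}
    {a : Lab} (hs : s ∈ ShatF N) (ha : ActOK' N s a)
    (hexcl : ∀ e, IsOptimal' N lam e → e s ≠ a) : Q[N, lam] v s a < v s := by
  refine ((hv s hs).1 a ha).lt_of_ne fun heq => hexcl (Function.update g s a) ?_ (by simp)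
  refine isOptimal'_of_greedy hl0 hl1 hv (fun x hx => ?_) fun x => ?_
  · by_cases hxs : x = s
    · subst hxs
      simpa using heq
    · simpa [hxs] using hgv x hx
  · by_cases hxs : x = s
    · subst hxs
      simpa using ha
    · simpa [hxs] using hg x

lemma actionValue_eq_of_isOptimal (hl0 : 0 ≤ lam) (hl1 : lam < 1)
    (hv : IsBellmanSolution (ShatF N) (Phat N) (rhat N) lam (ActOK' N) v)
    (hgv : ∀ s ∈ ShatF N, Q[N, lam] v s (g s) = v s) (hg : IsRule N g) {d : ℕ × ℕ → Lab}
    (hd : IsOptimal N lam d) :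
    ∀ s ∈ ShatF N, Q[N, lam] v s (d s) = v s := by
  obtain ⟨vd, hvd⟩ := exists_isValue hl0 hl1 d
  have hle : ∀ s ∈ ShatF N, vd s ≤ v s := hv.le_of_eq_actionValue (isSubstochastic_Phat N) hl0 hl1
    (fun s hs => Or.inl (hd.1 s (mem_ShatF_iff.1 hs))) hvd
  have hge : ∀ s ∈ ShatF N, v s ≤ vd s := fun s hs =>
    hd.2 vd hvd g hg v (fun s hs => (hgv s hs).symm) s (mem_ShatF_iff.1 hs)
  have heq : ∀ s ∈ ShatF N, vd s = v s := fun s hs => (hle s hs).antisymm (hge s hs)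
  intro s hs
  rw [← actionValue_congr heq]
  exact (hvd s hs).symm.trans (heq s hs)

end Optimality

section AddedActions

variable {N : ℕ} {s : ℕ × ℕ} {a : Lab}

def IsAdded (N : ℕ) (s : ℕ × ℕ) (a : Lab) : Prop :=
  s.1 = 2 ∧ 2 ≤ s.2 ∧ (a = Lab.a11 ∧ s.2 ≤ N - 2 ∨ a = Lab.a12 ∧ s.2 ≤ N - 3) ∨
  s.2 = 2 ∧ 2 ≤ s.1 ∧ (a = Lab.a21 ∧ s.1 ≤ N - 2 ∨ a = Lab.a22 ∧ s.1 ≤ N - 3)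

def AvoidsAdded (N : ℕ) (d : ℕ × ℕ → Lab) : Prop :=
  (∀ j : ℕ, 3 ≤ j → j ≤ N - 3 → d (2, j) ≠ Lab.a11 ∧ d (2, j) ≠ Lab.a12) ∧
  (d (2, N - 2) ≠ Lab.a11) ∧
  (∀ i : ℕ, 3 ≤ i → i ≤ N - 3 → d (i, 2) ≠ Lab.a21 ∧ d (i, 2) ≠ Lab.a22) ∧
  (d (N - 2, 2) ≠ Lab.a21) ∧
  (d (2, 2) ≠ Lab.a11 ∧ d (2, 2) ≠ Lab.a12 ∧ d (2, 2) ≠ Lab.a21 ∧ d (2, 2) ≠ Lab.a22)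

lemma IsAdded.actOK' (h : IsAdded N s a) : ActOK' N s a := by
  obtain ⟨i, j⟩ := s
  rcases h with ⟨rfl, hj, ⟨rfl, hj'⟩ | ⟨rfl, hj'⟩⟩ | ⟨rfl, hi, ⟨rfl, hi'⟩ | ⟨rfl, hi'⟩⟩ <;>
    simp only [ActOK', Prod.mk.injEq, reduceCtorEq, and_false, false_and, or_false, false_or,
      true_and, and_true, or_true] <;> omega

lemma IsAdded.mem (hN : 4 ≤ N) (h : IsAdded N s a) : s ∈ ShatF N := by
  obtain ⟨i, j⟩ := s
  rcases h with ⟨rfl, hj, ⟨-, hj'⟩ | ⟨-, hj'⟩⟩ | ⟨rfl, hi, ⟨-, hi'⟩ | ⟨-, hi'⟩⟩ <;>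
    exact mk_mem_ShatF (by omega) (by omega) (by omega) (by omega)

lemma AvoidsAdded.ne (h : AvoidsAdded N d) (ha : IsAdded N s a) : d s ≠ a := by
  obtain ⟨i, j⟩ := s
  rcases ha with ⟨rfl, hj, ⟨rfl, hj'⟩ | ⟨rfl, hj'⟩⟩ | ⟨rfl, hi, ⟨rfl, hi'⟩ | ⟨rfl, hi'⟩⟩
  · rcases (show j = 2 ∨ 3 ≤ j ∧ j ≤ N - 3 ∨ j = N - 2 by omega) with rfl | hj | rfl
    exacts [h.2.2.2.2.1, (h.1 j hj.1 hj.2).1, h.2.1]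
  · rcases (show j = 2 ∨ 3 ≤ j by omega) with rfl | hj
    exacts [h.2.2.2.2.2.1, (h.1 j hj hj').2]
  · rcases (show i = 2 ∨ 3 ≤ i ∧ i ≤ N - 3 ∨ i = N - 2 by omega) with rfl | hi | rfl
    exacts [h.2.2.2.2.2.2.1, (h.2.2.1 i hi.1 hi.2).1, h.2.2.2.1]
  · rcases (show i = 2 ∨ 3 ≤ i by omega) with rfl | hi
    exacts [h.2.2.2.2.2.2.2, (h.2.2.1 i hi hi').2]

lemma actOK_or_isAdded (hN : 5 ≤ N) (h : ActOK' N s a) : ActOK N s a ∨ IsAdded N s a := by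
  obtain ⟨i, j⟩ := s
  rcases h with h | ⟨rfl, ⟨rfl, hj⟩ | ⟨rfl, hj⟩⟩ | ⟨rfl, ⟨rfl, hi⟩ | ⟨rfl, hi⟩⟩ |
      ⟨⟨⟩, rfl | rfl | rfl | rfl⟩
  · exact Or.inl h
  all_goals
    right
    simp only [IsAdded, Std.le_refl, reduceCtorEq, false_and, or_self, and_false, true_and,
      or_false, false_or]
    omega

lemma isRule_of_avoidsAdded (hN : 5 ≤ N) {g : ℕ × ℕ → Lab} (hg : ∀ s, ActOK' N s (g s))
    (h : AvoidsAdded N g) : IsRule N g := fun s _ =>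
  (actOK_or_isAdded hN (hg s)).resolve_right fun ha => h.ne ha rfl

end AddedActions

section PrimedActions

variable {N : ℕ} {lam : ℝ} {s : ℕ × ℕ}

lemma Phat_a11p_of_le (h : s.2 ≤ N - 3) (x : ℕ × ℕ) :
    Phat N s Lab.a11p x = 1/4 * Phat N s Lab.zero x + 3/4 * Phat N s Lab.a11 x := by
  simp only [Phat, ker11p, ker11, if_pos h]
  split_ifs <;> norm_num

lemma Phat_a11p_of_eq (hN : 3 ≤ N) (h : s.2 = N - 2) (x : ℕ × ℕ) :
    Phat N s Lab.a11p x = 1/9 * Phat N s Lab.zero x + 8/9 * Phat N s Lab.a11 x := by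
  have h3 : ¬ s.2 ≤ N - 3 := by omega
  simp only [Phat, ker11p, ker11, if_neg h3, if_pos h]
  split_ifs <;> norm_num

lemma Phat_a12p_of_le (h : s.2 ≤ N - 4) (x : ℕ × ℕ) :
    Phat N s Lab.a12p x =
      17/80 * Phat N s Lab.zero x + 9/80 * Phat N s Lab.a11 x + 27/40 * Phat N s Lab.a12 x := by
  have h3 : s.2 ≤ N - 3 := by omega
  simp only [Phat, ker12p, ker12, ker11, if_pos h, if_pos h3]
  split_ifs <;> norm_num

/-- Unlike the other primed kernels, `a12'` at `(i, N - 3)` is not a mixture of kernels at that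
state; this signed combination also uses `a11` at `(i, N - 2)`. -/
lemma Phat_a12p_of_eq (hN : 4 ≤ N) (i : ℕ) (x : ℕ × ℕ) :
    81 * (3 * lam + 19) * Phat N (i, N - 3) Lab.a12p x =
      180 * (lam + 8) * Phat N (i, N - 3) Lab.a12 x + 25 * lam * Phat N (i, N - 2) Lab.a11 x
        - 25 * Phat N (i, N - 2) Lab.zero x + (38 * lam + 124) * Phat N (i, N - 3) Lab.zero x := by
  have h4 : ¬ N - 3 ≤ N - 4 := by omega
  have h3 : ¬ N - 2 ≤ N - 3 := by omega
  simp only [Phat, ker12p, ker12, ker11, if_neg h4, if_neg h3, if_true]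
  split_ifs <;> first | ring1 | (exfalso; simp only [Prod.ext_iff] at *; omega)

lemma actionValue_a11p_of_le (h : s.2 ≤ N - 3) (v : ℕ × ℕ → ℝ) :
    Q[N, lam] v s Lab.a11p = 1/4 * Q[N, lam] v s Lab.zero + 3/4 * Q[N, lam] v s Lab.a11 := by
  simp only [actionValue, Phat_a11p_of_le h, add_mul, Finset.sum_add_distrib, mul_assoc,
    ← Finset.mul_sum]
  ring

lemma actionValue_a11p_of_eq (hN : 3 ≤ N) (h : s.2 = N - 2) (v : ℕ × ℕ → ℝ) :
    Q[N, lam] v s Lab.a11p = 1/9 * Q[N, lam] v s Lab.zero + 8/9 * Q[N, lam] v s Lab.a11 := by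
  simp only [actionValue, Phat_a11p_of_eq hN h, add_mul, Finset.sum_add_distrib, mul_assoc,
    ← Finset.mul_sum]
  ring

lemma actionValue_a12p_of_le (h : s.2 ≤ N - 4) (v : ℕ × ℕ → ℝ) :
    Q[N, lam] v s Lab.a12p = 17/80 * Q[N, lam] v s Lab.zero + 9/80 * Q[N, lam] v s Lab.a11
      + 27/40 * Q[N, lam] v s Lab.a12 := by
  simp only [actionValue, Phat_a12p_of_le h, add_mul, Finset.sum_add_distrib, mul_assoc,
    ← Finset.mul_sum]
  ring

lemma sub_actionValue_a12p_of_eq (hN : 4 ≤ N) {i : ℕ} (hs : (i, N - 3) ∈ ShatF N)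
    (ht : (i, N - 2) ∈ ShatF N) (v : ℕ × ℕ → ℝ) :
    81 * (3 * lam + 19) * (v (i, N - 3) - Q[N, lam] v (i, N - 3) Lab.a12p) =
      180 * (lam + 8) * (v (i, N - 3) - Q[N, lam] v (i, N - 3) Lab.a12)
        + 25 * lam * (v (i, N - 2) - Q[N, lam] v (i, N - 2) Lab.a11)
        + (38 * lam + 99) * (v (i, N - 3) - Q[N, lam] v (i, N - 3) Lab.zero) := by
  have hsum : 81 * (3 * lam + 19) * ∑ x ∈ ShatF N, Phat N (i, N - 3) Lab.a12p x * v x =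
      180 * (lam + 8) * ∑ x ∈ ShatF N, Phat N (i, N - 3) Lab.a12 x * v x
        + 25 * lam * ∑ x ∈ ShatF N, Phat N (i, N - 2) Lab.a11 x * v x
        - 25 * ∑ x ∈ ShatF N, Phat N (i, N - 2) Lab.zero x * v x
        + (38 * lam + 124) * ∑ x ∈ ShatF N, Phat N (i, N - 3) Lab.zero x * v x := by
    simp only [Finset.mul_sum, ← Finset.sum_sub_distrib, ← Finset.sum_add_distrib]
    refine Finset.sum_congr rfl fun x _ => ?_
    rw [← mul_assoc, Phat_a12p_of_eq hN i x]
    ring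
  rw [sum_Phat_zero_mul hs, sum_Phat_zero_mul ht] at hsum
  have hr : ∀ j, j ≠ N → rhat N (i, j) = 0 := fun j hj => if_neg fun h => hj (Prod.ext_iff.1 h).2
  simp only [actionValue, hr (N - 3) (by omega), hr (N - 2) (by omega), sum_Phat_zero_mul hs]
  linear_combination (-lam) * hsum

end PrimedActions

section Exclusion

variable {N : ℕ} {lam : ℝ} {v : ℕ × ℕ → ℝ}

lemma actionValue_a11p_lt (hN : 3 ≤ N) {s : ℕ × ℕ} (hs : s.2 ≤ N - 2)
    (h0 : Q[N, lam] v s Lab.zero ≤ v s) (h11 : Q[N, lam] v s Lab.a11 < v s) :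
    Q[N, lam] v s Lab.a11p < v s := by
  rcases (show s.2 ≤ N - 3 ∨ s.2 = N - 2 by omega) with h | h
  · rw [actionValue_a11p_of_le h]
    linarith
  · rw [actionValue_a11p_of_eq hN h]
    linarith

lemma actionValue_a12p_lt (hN : 4 ≤ N) (hl0 : 0 ≤ lam) {i j : ℕ} (hj : j ≤ N - 3)
    (hs : (i, j) ∈ ShatF N) (ht : (i, N - 2) ∈ ShatF N)
    (h0 : Q[N, lam] v (i, j) Lab.zero ≤ v (i, j)) (h11 : Q[N, lam] v (i, j) Lab.a11 ≤ v (i, j))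
    (h12 : Q[N, lam] v (i, j) Lab.a12 < v (i, j))
    (h11' : Q[N, lam] v (i, N - 2) Lab.a11 ≤ v (i, N - 2)) :
    Q[N, lam] v (i, j) Lab.a12p < v (i, j) := by
  rcases (show j ≤ N - 4 ∨ j = N - 3 by omega) with h | rfl
  · rw [actionValue_a12p_of_le h]
    linarith
  · have key := sub_actionValue_a12p_of_eq hN hs ht v (lam := lam)
    have hpos : 0 < 81 * (3 * lam + 19) * (v (i, N - 3) - Q[N, lam] v (i, N - 3) Lab.a12p) := by
      rw [key]
      have := mul_pos (show 0 < 180 * (lam + 8) by positivity) (sub_pos.2 h12)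
      have := mul_nonneg (show 0 ≤ 25 * lam by positivity) (sub_nonneg.2 h11')
      have := mul_nonneg (show 0 ≤ 38 * lam + 99 by positivity) (sub_nonneg.2 h0)
      linarith
    exact sub_pos.1 (pos_of_mul_pos_right hpos (by positivity))

lemma actionValue_primed_lt_of_unprimed_lt (hN : 7 ≤ N) (hl0 : 0 ≤ lam)
    (h0 : ∀ j, 2 ≤ j → j ≤ N - 2 → Q[N, lam] v (2, j) Lab.zero ≤ v (2, j))
    (h11 : ∀ j, 2 ≤ j → j ≤ N - 2 → Q[N, lam] v (2, j) Lab.a11 < v (2, j))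
    (h12 : ∀ j, 2 ≤ j → j ≤ N - 3 → Q[N, lam] v (2, j) Lab.a12 < v (2, j))
    {j : ℕ} (hj : 2 ≤ j) (hj' : j ≤ N - 2) :
    Q[N, lam] v (2, j) Lab.a11p < v (2, j) ∧
      (j ≤ N - 3 → Q[N, lam] v (2, j) Lab.a12p < v (2, j)) :=
  ⟨actionValue_a11p_lt (by omega) hj' (h0 j hj hj') (h11 j hj hj'), fun hj3 =>
    actionValue_a12p_lt (by omega) hl0 hj3 (mk_mem_ShatF le_rfl (by omega) hj hj')
      (mk_mem_ShatF le_rfl (by omega) (by omega) le_rfl) (h0 j hj hj') (h11 j hj hj').le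
      (h12 j hj hj3) (h11 (N - 2) (by omega) le_rfl).le⟩

theorem ne_primed_of_isAdded_lt (hN : 7 ≤ N) (hl0 : 0 ≤ lam)
    (h0 : ∀ s ∈ ShatF N, Q[N, lam] v s Lab.zero ≤ v s)
    (hadd : ∀ s a, IsAdded N s a → Q[N, lam] v s a < v s) {d : ℕ × ℕ → Lab}
    (hd : ∀ s ∈ ShatF N, Q[N, lam] v s (d s) = v s) (j : ℕ) (hj : 2 ≤ j) (hj' : j ≤ N - 2) :
    (d (2, j) ≠ Lab.a11p ∧ (j ≤ N - 3 → d (2, j) ≠ Lab.a12p)) ∧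
      (d (j, 2) ≠ Lab.a21p ∧ (j ≤ N - 3 → d (j, 2) ≠ Lab.a22p)) := by
  have hs : (2, j) ∈ ShatF N := mk_mem_ShatF le_rfl (by omega) hj hj'
  have ht : (j, 2) ∈ ShatF N := mk_mem_ShatF hj hj' le_rfl (by omega)
  have hne : ∀ s ∈ ShatF N, ∀ a, Q[N, lam] v s a < v s → d s ≠ a := fun s hs a h hda =>
    h.ne (hda ▸ hd s hs)
  have hswp : ∀ j (a b : Lab), (∀ x, Phat N (2, j) a (swp x) = Phat N (j, 2) b x) →
      Q[N, lam] (v ∘ swp) (2, j) a = Q[N, lam] v (j, 2) b := fun j a b h =>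
    actionValue_comp_swp h v
  have hrow := actionValue_primed_lt_of_unprimed_lt hN hl0
    (fun j hj hj' => h0 _ (mk_mem_ShatF le_rfl (by omega) hj hj'))
    (fun j hj hj' => hadd _ _ (Or.inl ⟨rfl, hj, Or.inl ⟨rfl, hj'⟩⟩))
    (fun j hj hj' => hadd _ _ (Or.inl ⟨rfl, hj, Or.inr ⟨rfl, hj'⟩⟩)) hj hj'
  have hcol := actionValue_primed_lt_of_unprimed_lt (v := v ∘ swp) hN hl0
    (fun j hj hj' => (hswp j _ _ Phat_zero_swp).trans_le
      (h0 _ (mk_mem_ShatF hj hj' le_rfl (by omega))))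
    (fun j hj hj' => (hswp j Lab.a11 Lab.a21 fun _ => rfl).trans_lt
      (hadd _ _ (Or.inr ⟨rfl, hj, Or.inl ⟨rfl, hj'⟩⟩)))
    (fun j hj hj' => (hswp j Lab.a12 Lab.a22 fun _ => rfl).trans_lt
      (hadd _ _ (Or.inr ⟨rfl, hj, Or.inr ⟨rfl, hj'⟩⟩))) hj hj'
  rw [hswp j Lab.a11p Lab.a21p fun _ => rfl, hswp j Lab.a12p Lab.a22p fun _ => rfl] at hcol
  exact ⟨⟨hne _ hs _ hrow.1, fun h => hne _ hs _ (hrow.2 h)⟩,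
    ⟨hne _ ht _ hcol.1, fun h => hne _ ht _ (hcol.2 h)⟩⟩

end Exclusion

/-- if in the extended MDP no optimal decision rule ever uses the
added unprimed actions at the boundary states, then in the auxiliary MDP no
optimal decision rule ever uses the corresponding primed actions there. -/
theorem primed_excluded_of_extended (N : ℕ) (hN : 7 ≤ N)
    (lam : ℝ) (hl0 : 0 < lam) (hl1 : lam < 1)
    (hext : ∀ d : ℕ × ℕ → Lab, IsOptimal' N lam d →
      (∀ j : ℕ, 3 ≤ j → j ≤ N - 3 → d (2, j) ≠ Lab.a11 ∧ d (2, j) ≠ Lab.a12) ∧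
      (d (2, N - 2) ≠ Lab.a11) ∧
      (∀ i : ℕ, 3 ≤ i → i ≤ N - 3 → d (i, 2) ≠ Lab.a21 ∧ d (i, 2) ≠ Lab.a22) ∧
      (d (N - 2, 2) ≠ Lab.a21) ∧
      (d (2, 2) ≠ Lab.a11 ∧ d (2, 2) ≠ Lab.a12 ∧ d (2, 2) ≠ Lab.a21 ∧
        d (2, 2) ≠ Lab.a22)) :
    ∀ d : ℕ × ℕ → Lab, IsOptimal N lam d →
      (∀ j : ℕ, 3 ≤ j → j ≤ N - 3 → d (2, j) ≠ Lab.a11p ∧ d (2, j) ≠ Lab.a12p) ∧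
      (d (2, N - 2) ≠ Lab.a11p) ∧
      (∀ i : ℕ, 3 ≤ i → i ≤ N - 3 → d (i, 2) ≠ Lab.a21p ∧ d (i, 2) ≠ Lab.a22p) ∧
      (d (N - 2, 2) ≠ Lab.a21p) ∧
      (d (2, 2) ≠ Lab.a11p ∧ d (2, 2) ≠ Lab.a12p ∧ d (2, 2) ≠ Lab.a21p ∧
        d (2, 2) ≠ Lab.a22p) := by
  intro d hd
  have hA : ∀ s, ∃ a, ActOK' N s a := fun s => ⟨_, actOK'_zero N s⟩
  obtain ⟨v, hv⟩ :=
    exists_isBellmanSolution (r := rhat N) (isSubstochastic_Phat N) hl0.le hl1 _ hA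
  obtain ⟨g, hg, hgv⟩ := hv.exists_greedy hA
  have hgopt := isOptimal'_of_greedy hl0.le hl1 hv hgv hg
  have hdv := actionValue_eq_of_isOptimal hl0.le hl1 hv hgv
    (isRule_of_avoidsAdded (by omega) hg (hext g hgopt)) hd
  have h := ne_primed_of_isAdded_lt hN hl0.le (fun s hs => (hv s hs).1 _ (actOK'_zero N s))
    (fun s a ha => actionValue_lt_of_forall_isOptimal'_ne hl0.le hl1 hv hgv hg
      (ha.mem (by omega)) ha.actOK' fun e he => AvoidsAdded.ne (hext e he) ha) hdv
  have h2 := h 2 le_rfl (by omega)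
  exact ⟨fun j hj hj' => ⟨(h j (by omega) (by omega)).1.1, (h j (by omega) (by omega)).1.2 hj'⟩,
    (h (N - 2) (by omega) le_rfl).1.1,
    fun i hi hi' => ⟨(h i (by omega) (by omega)).2.1, (h i (by omega) (by omega)).2.2 hi'⟩,
    (h (N - 2) (by omega) le_rfl).2.1,
    h2.1.1, h2.1.2 (by omega), h2.2.1, h2.2.2 (by omega)⟩

end AuxMDP
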